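/- arXiv:1910.09977 — 2 statements merged into one kernel-verified Lean document; each statement's English description precedes it below -/
import Mathlib

section
/- Let Q : [0, ∞) → [0, ∞) be a continuous strictly increasing function with Q(0) = 0 and Q(t) → ∞. Let G : [0, ∞) → ℝ^m be bounded and measurable, and for ε > 0 define G_t^ε = (1/Q(ε)) ∫_{t∨ε}^∞ exp(−(Q(r) − Q(t∨ε))/Q(ε)) · G(r) dQ(r). Then (a) |G_t^ε| ≤ sup_{r≥0} |G_r| for all t ≥ 0, and (b) |G_t^ε − G_t| ≤ exp(2 − 1/√(Q(ε))) · sup_{r≥0}|G_r| + sup{ |G_r − G_t| : 0 ≤ Q(r) − Q(t) ≤ √(Q(ε)) ∨ Q(ε) } for all t ≥ 0. -/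
/-!
The substitution `x = Q r` carries `dQ` on `[a, ∞)` to Lebesgue measure on `[Q a, ∞)`, so with
`a = t ∨ ε` the kernel `(Q ε)⁻¹ exp (-(Q r - Q a) / Q ε) dQ r` is a probability measure on
`[a, ∞)`; averaging against it gives (a). For (b), split the average of `G r - G t` at
`Q r = Q t + δ`, `δ = √(Q ε) ∨ Q ε`. Below the split the integrand is bounded by the supremum in
the statement; beyond it by `2 sup |G|`, and since `Q a ≤ Q t + Q ε` the kernel mass there is
`exp (-(Q t + δ - Q a) / Q ε) ≤ e ^ (1 - 1 / √(Q ε))`, with `2 ≤ e` absorbing the factor `2`.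
-/

open MeasureTheory Filter Set Real

section WeightedAverage

variable {α E : Type*} [MeasurableSpace α] {μ : Measure α}
  [NormedAddCommGroup E] [NormedSpace ℝ E] {w : α → ℝ} {F : α → E} {c : ℝ}

theorem norm_inv_smul_integral_smul_le {M : ℝ} (hw : ∀ x, 0 ≤ w x)
    (hwc : ∫ x, w x ∂μ = c) (hc : 0 < c) (hF : ∀ᵐ x ∂μ, ‖F x‖ ≤ M) :
    ‖c⁻¹ • ∫ x, w x • F x ∂μ‖ ≤ M := by
  have hwi : Integrable w μ := Integrable.of_integral_ne_zero (hwc ▸ hc.ne')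
  have hbound : ‖∫ x, w x • F x ∂μ‖ ≤ M * c := by
    calc ‖∫ x, w x • F x ∂μ‖ ≤ ∫ x, M * w x ∂μ := by
          refine norm_integral_le_of_norm_le (hwi.const_mul M) ?_
          filter_upwards [hF] with x hx
          rw [norm_smul, Real.norm_of_nonneg (hw x), mul_comm]
          exact mul_le_mul_of_nonneg_right hx (hw x)
      _ = M * c := by rw [integral_const_mul, hwc]
  rw [norm_smul, Real.norm_of_nonneg (inv_nonneg.2 hc.le)]
  calc c⁻¹ * ‖∫ x, w x • F x ∂μ‖ ≤ c⁻¹ * (M * c) := by gcongr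
    _ = M := by field_simp

theorem norm_inv_smul_integral_smul_sub_le [CompleteSpace E] {S D : ℝ} {s : Set α} (v : E)
    (hw : ∀ x, 0 ≤ w x) (hwF : Integrable (fun x => w x • F x) μ) (hwc : ∫ x, w x ∂μ = c)
    (hc : 0 < c) (hS : 0 ≤ S) (hs : MeasurableSet s) (hFs : ∀ᵐ x ∂μ, x ∈ s → ‖F x - v‖ ≤ S)
    (hFsc : ∀ᵐ x ∂μ, x ∉ s → ‖F x - v‖ ≤ D) :
    ‖c⁻¹ • ∫ x, w x • F x ∂μ - v‖ ≤ S + D * (c⁻¹ * ∫ x in sᶜ, w x ∂μ) := by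
  have hwi : Integrable w μ := Integrable.of_integral_ne_zero (hwc ▸ hc.ne')
  have hcenter : c⁻¹ • ∫ x, w x • F x ∂μ - v = c⁻¹ • ∫ x, w x • (F x - v) ∂μ := by
    simp_rw [smul_sub]
    rw [integral_sub hwF (hwi.smul_const v), integral_smul_const, hwc, smul_sub, smul_smul,
      inv_mul_cancel₀ hc.ne', one_smul]
  have hbound : ‖∫ x, w x • (F x - v) ∂μ‖ ≤ S * c + D * ∫ x in sᶜ, w x ∂μ := by
    calc ‖∫ x, w x • (F x - v) ∂μ‖
        ≤ ∫ x, S * w x + sᶜ.indicator (fun x => D * w x) x ∂μ := by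
          refine norm_integral_le_of_norm_le
            ((hwi.const_mul S).add ((hwi.const_mul D).indicator hs.compl)) ?_
          filter_upwards [hFs, hFsc] with x hxs hxsc
          rw [norm_smul, Real.norm_of_nonneg (hw x)]
          by_cases hx : x ∈ s
          · simpa [hx, mul_comm] using mul_le_mul_of_nonneg_left (hxs hx) (hw x)
          · simp only [indicator_of_mem (mem_compl hx)]
            nlinarith [hxsc hx, hw x]
      _ = S * c + D * ∫ x in sᶜ, w x ∂μ := by
          rw [integral_add (hwi.const_mul S) ((hwi.const_mul D).indicator hs.compl),
            integral_indicator hs.compl, integral_const_mul, integral_const_mul, hwc]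
  rw [hcenter, norm_smul, Real.norm_of_nonneg (inv_nonneg.2 hc.le)]
  calc c⁻¹ * ‖∫ x, w x • (F x - v) ∂μ‖ ≤ c⁻¹ * (S * c + D * ∫ x in sᶜ, w x ∂μ) := by gcongr
    _ = S + D * (c⁻¹ * ∫ x in sᶜ, w x ∂μ) := by field_simp

end WeightedAverage

theorem exists_preimage_Iic_inter_Ici_eq_Icc {f : ℝ → ℝ} (hf : Monotone f) (hfc : Continuous f)
    (hftop : Tendsto f atTop atTop) {a v : ℝ} (hv : f a ≤ v) :
    ∃ b, f b = v ∧ f ⁻¹' Iic v ∩ Ici a = Icc a b := by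
  obtain ⟨T, hT⟩ := (hftop.eventually_gt_atTop v).exists_forall_of_atTop
  have hbdd : BddAbove (f ⁻¹' Iic v ∩ Ici a) :=
    ⟨T, fun r hr => le_of_not_gt fun h => (hT r h.le).not_ge hr.1⟩
  have hb : sSup (f ⁻¹' Iic v ∩ Ici a) ∈ f ⁻¹' Iic v ∩ Ici a :=
    ((isClosed_Iic.preimage hfc).inter isClosed_Ici).csSup_mem ⟨a, hv, self_mem_Ici⟩ hbdd
  set b := sSup (f ⁻¹' Iic v ∩ Ici a)
  refine ⟨b, le_antisymm hb.1 ?_, Subset.antisymm (fun r hr => ⟨hr.2, le_csSup hbdd hr⟩)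
    fun r hr => ⟨(hf hr.2).trans hb.1, hr.1⟩⟩
  obtain ⟨r, hr, hfr⟩ := intermediate_value_Icc (le_max_left b T) hfc.continuousOn
    ⟨hb.1, (hT _ (le_max_right b T)).le⟩
  exact hfr ▸ hf (le_csSup hbdd ⟨hfr.le, hb.2.trans hr.1⟩)

theorem integral_Ioi_exp_neg_sub_div {c : ℝ} (hc : 0 < c) (b p : ℝ) :
    ∫ x in Ioi p, exp (-(x - b) / c) = c * exp (-(p - b) / c) := by
  have hsplit : ∀ x, exp (-(x - b) / c) = exp (b / c) * exp (-c⁻¹ * x) := fun x => by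
    rw [← exp_add]; ring_nf
  simp_rw [hsplit]
  rw [integral_const_mul, integral_exp_mul_Ioi (by simpa using hc) p, neg_div_neg_eq,
    div_inv_eq_mul]
  ring

namespace StieltjesFunction

variable {Q : StieltjesFunction ℝ}

theorem measure_preimage_Iic_inter_Ici (hQc : Continuous Q) (hQtop : Tendsto Q atTop atTop)
    (a v : ℝ) : Q.measure (Q ⁻¹' Iic v ∩ Ici a) = ENNReal.ofReal (v - Q a) := by
  rcases lt_or_ge v (Q a) with hv | hv
  · have hempty : Q ⁻¹' Iic v ∩ Ici a = ∅ :=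
      eq_empty_of_forall_notMem fun r hr => (hr.1.trans_lt hv).not_ge (Q.mono hr.2)
    rw [hempty, measure_empty, ENNReal.ofReal_of_nonpos (by linarith)]
  · obtain ⟨b, hQb, hIcc⟩ := exists_preimage_Iic_inter_Ici_eq_Icc Q.mono hQc hQtop hv
    rw [hIcc, Q.measure_Icc, hQb, hQc.continuousWithinAt.leftLim_eq]

theorem map_restrict_Ici (hQc : Continuous Q) (hQtop : Tendsto Q atTop atTop) (a : ℝ) :
    (Q.measure.restrict (Ici a)).map Q = volume.restrict (Ici (Q a)) := by
  have hIic : ∀ v,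
      volume.restrict (Ici (Q a)) (Iic v) = (Q.measure.restrict (Ici a)).map Q (Iic v) := by
    intro v
    rw [Measure.map_apply hQc.measurable measurableSet_Iic,
      Measure.restrict_apply (hQc.measurable measurableSet_Iic),
      measure_preimage_Iic_inter_Ici hQc hQtop, Measure.restrict_apply measurableSet_Iic,
      Iic_inter_Ici, Real.volume_Icc]
  refine (Measure.ext_of_Ioc _ _ fun u v huv => ?_).symm
  have hfin : volume.restrict (Ici (Q a)) (Iic u) ≠ ⊤ := by
    rw [Measure.restrict_apply measurableSet_Iic, Iic_inter_Ici, Real.volume_Icc]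
    exact ENNReal.ofReal_ne_top
  rw [← Iic_sdiff_Iic, measure_sdiff (Iic_subset_Iic.2 huv.le) nullMeasurableSet_Iic hfin,
    measure_sdiff (Iic_subset_Iic.2 huv.le) nullMeasurableSet_Iic (hIic u ▸ hfin), hIic, hIic]

theorem setIntegral_preimage_restrict_Ici {E : Type*} [NormedAddCommGroup E] [NormedSpace ℝ E]
    (hQc : Continuous Q) (hQtop : Tendsto Q atTop atTop) (a : ℝ) {φ : ℝ → E}
    (hφ : Continuous φ) {s : Set ℝ} (hs : MeasurableSet s) :
    ∫ r in Q ⁻¹' s, φ (Q r) ∂Q.measure.restrict (Ici a) = ∫ x in s ∩ Ici (Q a), φ x := by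
  rw [← setIntegral_map hs hφ.aestronglyMeasurable hQc.measurable.aemeasurable,
    map_restrict_Ici hQc hQtop, Measure.restrict_restrict hs]

theorem integral_exp_kernel (hQc : Continuous Q) (hQtop : Tendsto Q atTop atTop) {c : ℝ}
    (hc : 0 < c) (a : ℝ) : ∫ r in Ici a, exp (-(Q r - Q a) / c) ∂Q.measure = c := by
  have h := setIntegral_preimage_restrict_Ici hQc hQtop a
    (φ := fun x => exp (-(x - Q a) / c)) (by fun_prop) MeasurableSet.univ
  rw [preimage_univ, Measure.restrict_univ, univ_inter] at h
  rw [h, integral_Ici_eq_integral_Ioi, integral_Ioi_exp_neg_sub_div hc, sub_self, neg_zero,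
    zero_div, exp_zero, mul_one]

theorem integral_exp_kernel_preimage_Ioi (hQc : Continuous Q) (hQtop : Tendsto Q atTop atTop)
    {c : ℝ} (hc : 0 < c) {a p : ℝ} (hp : Q a ≤ p) :
    ∫ r in Q ⁻¹' Ioi p, exp (-(Q r - Q a) / c) ∂Q.measure.restrict (Ici a) =
      c * exp (-(p - Q a) / c) := by
  rw [setIntegral_preimage_restrict_Ici hQc hQtop a (φ := fun x => exp (-(x - Q a) / c))
    (by fun_prop) _root_.measurableSet_Ioi, inter_eq_left.2 (Ioi_subset_Ici hp),
    integral_Ioi_exp_neg_sub_div hc]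

theorem integrable_exp_kernel (hQc : Continuous Q) (hQtop : Tendsto Q atTop atTop) {c : ℝ}
    (hc : 0 < c) (a : ℝ) :
    Integrable (fun r => exp (-(Q r - Q a) / c)) (Q.measure.restrict (Ici a)) :=
  Integrable.of_integral_ne_zero ((integral_exp_kernel hQc hQtop hc a).symm ▸ hc.ne')

theorem norm_inv_smul_integral_exp_kernel_sub_le {E : Type*} [NormedAddCommGroup E]
    [NormedSpace ℝ E] [CompleteSpace E] (hQc : Continuous Q) (hQtop : Tendsto Q atTop atTop)
    {c : ℝ} (hc : 0 < c) {a p : ℝ} (hp : Q a ≤ p) {F : ℝ → E}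
    (hF : Integrable (fun r => exp (-(Q r - Q a) / c) • F r) (Q.measure.restrict (Ici a)))
    (v : E) {S D : ℝ} (hS : 0 ≤ S) (hnear : ∀ r, a ≤ r → Q r ≤ p → ‖F r - v‖ ≤ S)
    (hfar : ∀ r, a ≤ r → p < Q r → ‖F r - v‖ ≤ D) :
    ‖c⁻¹ • ∫ r in Ici a, exp (-(Q r - Q a) / c) • F r ∂Q.measure - v‖ ≤
      S + D * exp (-(p - Q a) / c) := by
  have h := norm_inv_smul_integral_smul_sub_le v (fun _ => (exp_pos _).le) hF
    (integral_exp_kernel hQc hQtop hc a) hc hS (hQc.measurable measurableSet_Iic)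
    (ae_restrict_of_forall_mem measurableSet_Ici fun r hr hrp => hnear r hr hrp)
    (ae_restrict_of_forall_mem measurableSet_Ici fun r hr hrp => hfar r hr (not_le.1 hrp))
  rwa [← preimage_compl, compl_Iic, integral_exp_kernel_preimage_Ioi hQc hQtop hc hp,
    inv_mul_cancel_left₀ hc.ne'] at h

end StieltjesFunction

theorem two_mul_exp_neg_div_le {c x : ℝ} (hc : 0 < c) (hx : √c - c ≤ x) :
    2 * exp (-x / c) ≤ exp (2 - 1 / √c) := by
  have hexp : -x / c ≤ 1 - 1 / √c := by
    rw [← sqrt_div_self', div_le_iff₀ hc]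
    field_simp
    linarith
  calc 2 * exp (-x / c) ≤ exp 1 * exp (1 - 1 / √c) := by
        gcongr
        linarith [add_one_le_exp 1]
    _ = exp (2 - 1 / √c) := by rw [← exp_add]; ring_nf

/-- Smoothing approximation lemma: let `Q` be a continuous strictly increasing clock with
`Q(0) = 0`, `Q(t) → ∞`, and `G : [0,∞) → ℝ^m` bounded measurable.  With
`G_t^ε = (1/Q(ε)) ∫_{t∨ε}^∞ exp(−(Q(r) − Q(t∨ε))/Q(ε)) G(r) dQ(r)`, one has
(a) `|G_t^ε| ≤ sup_{r≥0} |G_r|` and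
(b) `|G_t^ε − G_t| ≤ exp(2 − 1/√Q(ε)) sup_{r≥0}|G_r|
      + sup{ |G_r − G_t| : 0 ≤ Q(r) − Q(t) ≤ √Q(ε) ∨ Q(ε) }` for all `t ≥ 0`. -/
theorem stmt_16 (m : ℕ) (Q : StieltjesFunction ℝ) (hQc : Continuous Q)
    (hQmono : StrictMonoOn Q (Set.Ici 0)) (hQ0 : Q 0 = 0)
    (hQtop : Tendsto (fun t => Q t) atTop atTop)
    (G : ℝ → EuclideanSpace ℝ (Fin m)) (hG : Measurable G)
    (C : ℝ) (hbdd : ∀ r, ‖G r‖ ≤ C)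
    (ε : ℝ) (hε : 0 < ε) (t : ℝ) (ht : 0 ≤ t) :
    (‖(Q ε)⁻¹ • ∫ r in Set.Ici (max t ε),
        Real.exp (-(Q r - Q (max t ε)) / Q ε) • G r ∂Q.measure‖ ≤
      ⨆ r : Set.Ici (0 : ℝ), ‖G r‖) ∧
    (‖((Q ε)⁻¹ • ∫ r in Set.Ici (max t ε),
        Real.exp (-(Q r - Q (max t ε)) / Q ε) • G r ∂Q.measure) - G t‖ ≤
      Real.exp (2 - 1 / Real.sqrt (Q ε)) * (⨆ r : Set.Ici (0 : ℝ), ‖G r‖) +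
        sSup {x : ℝ | ∃ r : ℝ, 0 ≤ Q r - Q t ∧ Q r - Q t ≤ max (Real.sqrt (Q ε)) (Q ε) ∧
          x = ‖G r - G t‖}) := by
  set c := Q ε
  set a := max t ε
  set δ := max √c c
  set M := ⨆ r : Ici (0 : ℝ), ‖G r‖
  set S := sSup {x : ℝ | ∃ r : ℝ, 0 ≤ Q r - Q t ∧ Q r - Q t ≤ δ ∧ x = ‖G r - G t‖}
  have hc : 0 < c := hQ0 ▸ hQmono self_mem_Ici hε.le hε
  have hQa : Q a ≤ Q t + c := by
    have hQt : 0 ≤ Q t := hQ0 ▸ Q.mono ht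
    rw [Q.mono.map_max]
    exact max_le (by linarith) (by linarith)
  have hM : ∀ r, 0 ≤ r → ‖G r‖ ≤ M := fun r hr =>
    le_ciSup (f := fun r : Ici (0 : ℝ) => ‖G r‖) ⟨C, by rintro _ ⟨r, rfl⟩; exact hbdd r⟩ ⟨r, hr⟩
  have hS : ∀ r, 0 ≤ Q r - Q t → Q r - Q t ≤ δ → ‖G r - G t‖ ≤ S := fun r h₁ h₂ =>
    le_csSup ⟨C + C, by
      rintro _ ⟨r, -, -, rfl⟩; exact (norm_sub_le _ _).trans (add_le_add (hbdd r) (hbdd t))⟩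
      ⟨r, h₁, h₂, rfl⟩
  have ha : 0 ≤ a := ht.trans (le_max_left t ε)
  have hwG := (Q.integrable_exp_kernel hQc hQtop hc a).smul_bdd C hG.aestronglyMeasurable
    (ae_of_all _ hbdd)
  refine ⟨norm_inv_smul_integral_smul_le (fun _ => (exp_pos _).le)
    (Q.integral_exp_kernel hQc hQtop hc a) hc
    (ae_restrict_of_forall_mem measurableSet_Ici fun r hr => hM r (ha.trans hr)), ?_⟩
  have hS0 : 0 ≤ S := (norm_nonneg _).trans (hS t (by simp) (by simp [δ, hc.le]))
  have hnear : ∀ r, a ≤ r → Q r ≤ Q t + δ → ‖G r - G t‖ ≤ S := fun r hr hrδ =>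
    hS r (sub_nonneg.2 (Q.mono ((le_max_left t ε).trans hr))) (by linarith)
  have hfar : ∀ r, a ≤ r → Q t + δ < Q r → ‖G r - G t‖ ≤ M + M := fun r hr _ =>
    (norm_sub_le _ _).trans (add_le_add (hM r (ha.trans hr)) (hM t ht))
  refine (Q.norm_inv_smul_integral_exp_kernel_sub_le hQc hQtop hc
    (by linarith [le_max_right √c c]) hwG (G t) hS0 hnear hfar).trans ?_
  have htail := two_mul_exp_neg_div_le hc (x := Q t + δ - Q a) (by linarith [le_max_left √c c])
  nlinarith [(norm_nonneg _).trans (hM 0 le_rfl)]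
end

section
/- Let Q : [0, ∞) → [0, ∞) be continuous, strictly increasing, Q(0) = 0, Q(t) → ∞, and let G : [0, ∞) → ℝ^m be bounded, measurable and continuous. With G^ε defined as the exponential average G_t^ε = (1/Q(ε)) ∫_{t∨ε}^∞ e^{−(Q(r)−Q(t∨ε))/Q(ε)} G(r) dQ(r), one has for every T > 0: sup_{s∈[0,T]} |G_s^ε − G_s| → 0 as ε → 0⁺. -/
/-!
Pushing `Q.measure` on `[t, ∞)` forward along the clock `Q` gives Lebesgue measure on
`[Q t, ∞)`, so the weight `exp (-(Q r - Q t) / c)` has total mass `c` and `G^ε_t - G t` is a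
weighted average of `G r - G t`. Where `Q r - Q t ≤ δ` this is small because `G` is uniformly
continuous in clock time on compacts (`Q` being injective there); beyond, the weight is at most
`exp (-δ / 2c)` times the weight with parameter `2c`, whose mass is `2c`. As `Q ε → 0` and
`max s ε - s ≤ ε`, both contributions vanish uniformly in `s ∈ [0, T]`.
-/

open MeasureTheory Filter Set Real Topology

theorem MeasureTheory.Measure.ext_of_Iic_of_ne_top {α : Type*} [TopologicalSpace α]
    {_ : MeasurableSpace α} [SecondCountableTopology α] [LinearOrder α] [OrderTopology α]
    [BorelSpace α] [NoMinOrder α] (μ ν : Measure α) (hμ : ∀ a, μ (Iic a) ≠ ⊤)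
    (h : ∀ a, μ (Iic a) = ν (Iic a)) : μ = ν := by
  refine Measure.ext_of_Ioc' μ ν (fun a b _ ↦ ne_top_of_le_ne_top (hμ b)
    (measure_mono Ioc_subset_Iic_self)) fun a b hab ↦ ?_
  rw [← Iic_sdiff_Iic, measure_sdiff (Iic_subset_Iic.2 hab.le) nullMeasurableSet_Iic (hμ a),
    measure_sdiff (Iic_subset_Iic.2 hab.le) nullMeasurableSet_Iic (h a ▸ hμ a), h, h]

theorem exp_neg_sub_div_eq (y u c : ℝ) : exp (-(y - u) / c) = exp (u / c) * exp (-c⁻¹ * y) := by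
  rw [← exp_add]; ring_nf

theorem integrableOn_exp_neg_sub_div_Ici (u : ℝ) {c : ℝ} (hc : 0 < c) :
    IntegrableOn (fun y ↦ exp (-(y - u) / c)) (Ici u) := by
  rw [integrableOn_Ici_iff_integrableOn_Ioi]
  simp only [exp_neg_sub_div_eq _ u c]
  exact (integrableOn_exp_mul_Ioi (neg_lt_zero.2 (inv_pos.2 hc)) u).const_mul _

theorem integral_exp_neg_sub_div_Ici (u : ℝ) {c : ℝ} (hc : 0 < c) :
    ∫ y in Ici u, exp (-(y - u) / c) = c := by
  simp only [exp_neg_sub_div_eq _ u c, integral_Ici_eq_integral_Ioi, integral_const_mul,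
    integral_exp_mul_Ioi (neg_lt_zero.2 (inv_pos.2 hc))]
  rw [neg_div_neg_eq, div_inv_eq_mul, ← mul_assoc, ← exp_add, div_eq_inv_mul, neg_mul,
    add_neg_cancel, exp_zero, one_mul]

theorem exp_neg_div_mul_le {x δ c d η B : ℝ} (hc : 0 < c) (hη : 0 ≤ η) (hB : 0 ≤ B)
    (hdη : x ≤ δ → d ≤ η) (hdB : d ≤ B) :
    exp (-x / c) * d ≤ η * exp (-x / c) + B * exp (-δ / (2 * c)) * exp (-x / (2 * c)) := by
  rcases le_or_gt x δ with hx | hx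
  · have : 0 ≤ B * exp (-δ / (2 * c)) * exp (-x / (2 * c)) := by positivity
    nlinarith [mul_le_mul_of_nonneg_left (hdη hx) (exp_pos (-x / c)).le]
  · calc exp (-x / c) * d ≤ exp (-x / c) * B := by gcongr
      _ = B * exp (-x / (2 * c)) * exp (-x / (2 * c)) := by
        rw [mul_comm, mul_assoc, ← exp_add]; ring_nf
      _ ≤ B * exp (-δ / (2 * c)) * exp (-x / (2 * c)) := by gcongr
      _ ≤ η * exp (-x / c) + B * exp (-δ / (2 * c)) * exp (-x / (2 * c)) :=
        le_add_of_nonneg_left (by positivity)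

namespace StieltjesFunction

variable {F : StieltjesFunction ℝ} {t c : ℝ}

theorem measure_preimage_Iic_inter_Ici_s17 (hFc : Continuous F) (hF : StrictMonoOn F (Ici t))
    (hFtop : Tendsto F atTop atTop) (y : ℝ) :
    F.measure (F ⁻¹' Iic y ∩ Ici t) = ENNReal.ofReal (y - F t) := by
  rcases lt_or_ge y (F t) with hy | hy
  · have : F ⁻¹' Iic y ∩ Ici t = ∅ :=
      eq_empty_of_forall_notMem fun r ⟨hry, htr⟩ ↦ hy.not_ge ((F.mono htr).trans hry)
    rw [this, measure_empty, ENNReal.ofReal_of_nonpos (sub_nonpos.2 hy.le)]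
  obtain ⟨R, hR⟩ := (hFtop.eventually_ge_atTop y).exists_forall_of_atTop
  obtain ⟨x, ⟨htx, -⟩, rfl⟩ : y ∈ F '' Icc t (max t R) :=
    intermediate_value_Icc (le_max_left t R) hFc.continuousOn ⟨hy, hR _ (le_max_right t R)⟩
  have : F ⁻¹' Iic (F x) ∩ Ici t = Icc t x := by
    ext r
    simp only [mem_inter_iff, mem_preimage, mem_Iic, mem_Ici, mem_Icc]
    exact ⟨fun ⟨hrx, htr⟩ ↦ ⟨htr, (hF.le_iff_le htr htx).1 hrx⟩,
      fun ⟨htr, hrx⟩ ↦ ⟨F.mono hrx, htr⟩⟩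
  rw [this, F.measure_Icc, hFc.continuousWithinAt.leftLim_eq]

theorem map_measure_restrict_Ici (hFc : Continuous F) (hF : StrictMonoOn F (Ici t))
    (hFtop : Tendsto F atTop atTop) :
    (F.measure.restrict (Ici t)).map F = volume.restrict (Ici (F t)) := by
  refine Measure.ext_of_Iic_of_ne_top _ _ (fun y ↦ ?_) fun y ↦ ?_ <;>
    rw [Measure.map_apply hFc.measurable measurableSet_Iic,
      Measure.restrict_apply (hFc.measurable measurableSet_Iic),
      measure_preimage_Iic_inter_Ici_s17 hFc hF hFtop]
  · exact ENNReal.ofReal_ne_top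
  · rw [Measure.restrict_apply measurableSet_Iic, Iic_inter_Ici, Real.volume_Icc]

variable {E : Type*} [NormedAddCommGroup E]

theorem integrableOn_comp_Ici_iff (hFc : Continuous F) (hF : StrictMonoOn F (Ici t))
    (hFtop : Tendsto F atTop atTop) {f : ℝ → E} (hf : Continuous f) :
    IntegrableOn (fun r ↦ f (F r)) (Ici t) F.measure ↔ IntegrableOn f (Ici (F t)) := by
  rw [IntegrableOn, IntegrableOn, ← map_measure_restrict_Ici hFc hF hFtop,
    integrable_map_measure hf.aestronglyMeasurable hFc.aemeasurable]
  rfl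

variable [NormedSpace ℝ E]

theorem integral_comp_Ici (hFc : Continuous F) (hF : StrictMonoOn F (Ici t))
    (hFtop : Tendsto F atTop atTop) {f : ℝ → E} (hf : Continuous f) :
    ∫ r in Ici t, f (F r) ∂F.measure = ∫ y in Ici (F t), f y := by
  rw [← map_measure_restrict_Ici hFc hF hFtop,
    integral_map hFc.aemeasurable hf.aestronglyMeasurable]

theorem integrableOn_exp_neg_sub_div (hFc : Continuous F) (hF : StrictMonoOn F (Ici t))
    (hFtop : Tendsto F atTop atTop) (hc : 0 < c) :
    IntegrableOn (fun r ↦ exp (-(F r - F t) / c)) (Ici t) F.measure :=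
  (integrableOn_comp_Ici_iff hFc hF hFtop (f := fun y ↦ exp (-(y - F t) / c))
    (by fun_prop)).2 (integrableOn_exp_neg_sub_div_Ici _ hc)

theorem integral_exp_neg_sub_div (hFc : Continuous F) (hF : StrictMonoOn F (Ici t))
    (hFtop : Tendsto F atTop atTop) (hc : 0 < c) :
    ∫ r in Ici t, exp (-(F r - F t) / c) ∂F.measure = c := by
  rw [integral_comp_Ici hFc hF hFtop (f := fun y ↦ exp (-(y - F t) / c)) (by fun_prop),
    integral_exp_neg_sub_div_Ici _ hc]

/-- With `c = Q ε` and `t = s ∨ ε` this is the paper's `G^ε_s`. -/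
noncomputable def expSmoothing (F : StieltjesFunction ℝ) (G : ℝ → E) (c t : ℝ) : E :=
  c⁻¹ • ∫ r in Ici t, exp (-(F r - F t) / c) • G r ∂F.measure

theorem norm_expSmoothing_sub_le [CompleteSpace E] {G : ℝ → E} {C δ η : ℝ} (hFc : Continuous F)
    (hF : StrictMonoOn F (Ici t)) (hFtop : Tendsto F atTop atTop) (hGc : Continuous G)
    (hbdd : ∀ r, ‖G r‖ ≤ C) (hc : 0 < c) (hη : 0 ≤ η)
    (hmod : ∀ r, t ≤ r → F r - F t ≤ δ → ‖G r - G t‖ ≤ η) :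
    ‖F.expSmoothing G c t - G t‖ ≤ η + 4 * C * exp (-δ / (2 * c)) := by
  set w := fun r ↦ exp (-(F r - F t) / c)
  set v := fun r ↦ exp (-(F r - F t) / (2 * c))
  have hc2 : 0 < 2 * c := by positivity
  have hw := integrableOn_exp_neg_sub_div hFc hF hFtop hc
  have hv := integrableOn_exp_neg_sub_div hFc hF hFtop hc2
  have hC : 0 ≤ C := (norm_nonneg _).trans (hbdd t)
  have hwG : IntegrableOn (fun r ↦ w r • G r) (Ici t) F.measure :=
    hw.smul_bdd C hGc.aestronglyMeasurable (ae_of_all _ hbdd)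
  have hcenter : F.expSmoothing G c t - G t =
      c⁻¹ • ∫ r in Ici t, w r • (G r - G t) ∂F.measure := by
    simp only [smul_sub]
    rw [integral_sub hwG (hw.smul_const _), integral_smul_const,
      integral_exp_neg_sub_div hFc hF hFtop hc, smul_sub, smul_smul, inv_mul_cancel₀ hc.ne',
      one_smul]
    rfl
  have hpointwise : ∀ r ∈ Ici t, ‖w r • (G r - G t)‖ ≤
      η * w r + 2 * C * exp (-δ / (2 * c)) * v r := fun r hr ↦ by
    rw [norm_smul, norm_of_nonneg (exp_pos _).le]
    refine exp_neg_div_mul_le hc hη (by positivity) (hmod r hr) ?_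
    exact (norm_sub_le _ _).trans (by linarith [hbdd r, hbdd t])
  have hint := norm_integral_le_of_norm_le ((hw.const_mul η).add (hv.const_mul _))
    ((ae_restrict_iff' measurableSet_Ici).2 (ae_of_all _ hpointwise))
  simp only [Pi.add_apply] at hint
  rw [integral_add (hw.const_mul η) (hv.const_mul _), integral_const_mul, integral_const_mul,
    integral_exp_neg_sub_div hFc hF hFtop hc, integral_exp_neg_sub_div hFc hF hFtop hc2] at hint
  calc ‖F.expSmoothing G c t - G t‖
      ≤ c⁻¹ * (η * c + 2 * C * exp (-δ / (2 * c)) * (2 * c)) := by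
        rw [hcenter, norm_smul, norm_of_nonneg (inv_pos.2 hc).le]
        gcongr
    _ = η + 4 * C * exp (-δ / (2 * c)) := by field_simp; ring

end StieltjesFunction

theorem IsCompact.exists_pos_forall_dist_lt_of_injOn {X Y E : Type*} [TopologicalSpace X]
    [MetricSpace Y] [PseudoMetricSpace E] {K : Set X} (hK : IsCompact K) {q : X → Y}
    (hq : Continuous q) (hinj : InjOn q K) {G : X → E} (hG : Continuous G) {η : ℝ}
    (hη : 0 < η) :
    ∃ δ > 0, ∀ x ∈ K, ∀ y ∈ K, dist (q x) (q y) ≤ δ → dist (G x) (G y) < η := by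
  set S := K ×ˢ K ∩ {p | η ≤ dist (G p.1) (G p.2)}
  have hS : IsCompact S := (hK.prod hK).inter_right (isClosed_le continuous_const (by fun_prop))
  obtain ⟨δ, hδ, hδS⟩ := hS.exists_forall_le' (f := fun p ↦ dist (q p.1) (q p.2))
    (by fun_prop : Continuous _).continuousOn fun p ⟨⟨hx, hy⟩, hp⟩ ↦ dist_pos.2 fun h ↦
      (hη.trans_le hp).ne' (by rw [hinj hx hy h, dist_self])
  refine ⟨δ / 2, half_pos hδ, fun x hx y hy hxy ↦ ?_⟩
  by_contra! h
  linarith [hδS (x, y) ⟨⟨hx, hy⟩, h⟩]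

theorem exists_pos_forall_dist_lt_of_sub_le {E : Type*} [PseudoMetricSpace E] {Q : ℝ → ℝ}
    (hQc : Continuous Q) (hQmono : StrictMonoOn Q (Ici 0)) (hQtop : Tendsto Q atTop atTop)
    {G : ℝ → E} (hGc : Continuous G) (T : ℝ) {η : ℝ} (hη : 0 < η) :
    ∃ δ > 0, ∀ t ∈ Icc 0 T, ∀ r, t ≤ r → Q r - Q t ≤ δ → dist (G r) (G t) < η := by
  obtain ⟨R, hQR, hTR⟩ :=
    ((hQtop.eventually_ge_atTop (Q T + 1)).and (eventually_ge_atTop T)).exists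
  obtain ⟨δ, hδ, hmod⟩ := isCompact_Icc.exists_pos_forall_dist_lt_of_injOn hQc
    (hQmono.injOn.mono Icc_subset_Ici_self) hGc hη (K := Icc 0 R)
  refine ⟨min δ 1, lt_min hδ one_pos, fun t ⟨ht0, htT⟩ r htr hQtr ↦ ?_⟩
  have hr0 : 0 ≤ r := ht0.trans htr
  have hrR : r ≤ R := by
    by_contra! hRr
    have hQRr := hQmono (ht0.trans (htT.trans hTR)) hr0 hRr
    have hQtT := hQmono.monotoneOn ht0 (ht0.trans htT) htT
    linarith [min_le_right δ 1]
  refine hmod r ⟨hr0, hrR⟩ t ⟨ht0, htT.trans hTR⟩ ?_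
  rw [Real.dist_eq, abs_of_nonneg (sub_nonneg.2 (hQmono.monotoneOn ht0 hr0 htr))]
  exact hQtr.trans (min_le_left δ 1)

theorem tendsto_exp_neg_div_two_mul_nhdsGT_zero {δ : ℝ} (hδ : 0 < δ) :
    Tendsto (fun c ↦ exp (-δ / (2 * c))) (𝓝[>] 0) (𝓝 0) := by
  simp only [div_eq_mul_inv, mul_inv, ← mul_assoc]
  exact tendsto_exp_atBot.comp
    (tendsto_inv_nhdsGT_zero.const_mul_atTop_of_neg (by linarith : -δ * 2⁻¹ < 0))

theorem tendsto_nhdsGT_zero_of_strictMonoOn {Q : ℝ → ℝ} (hQc : Continuous Q)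
    (hQmono : StrictMonoOn Q (Ici 0)) (hQ0 : Q 0 = 0) : Tendsto Q (𝓝[>] 0) (𝓝[>] 0) :=
  tendsto_nhdsWithin_iff.2 ⟨(hQc.tendsto' 0 0 hQ0).mono_left nhdsWithin_le_nhds,
    eventually_nhdsWithin_of_forall fun _ hε ↦
      hQ0 ▸ hQmono (mem_Ici.2 le_rfl) (mem_Ici.2 (mem_Ioi.1 hε).le) hε⟩

theorem StieltjesFunction.eventually_forall_norm_expSmoothing_sub_lt {E : Type*}
    [NormedAddCommGroup E] [NormedSpace ℝ E] [CompleteSpace E] {Q : StieltjesFunction ℝ}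
    (hQc : Continuous Q) (hQmono : StrictMonoOn Q (Ici 0)) (hQ0 : Q 0 = 0)
    (hQtop : Tendsto Q atTop atTop) {G : ℝ → E} (hGc : Continuous G) {C : ℝ}
    (hbdd : ∀ r, ‖G r‖ ≤ C) (T : ℝ) {η : ℝ} (hη : 0 < η) :
    ∀ᶠ ε in 𝓝[>] 0, ∀ s ∈ Icc 0 T, ‖Q.expSmoothing G (Q ε) (max s ε) - G s‖ < η := by
  have hη3 : 0 < η / 3 := by positivity
  obtain ⟨δ, hδ, hclock⟩ := exists_pos_forall_dist_lt_of_sub_le hQc hQmono hQtop hGc (T + 1) hη3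
  obtain ⟨δ', hδ', htime⟩ := isCompact_Icc.exists_pos_forall_dist_lt_of_injOn continuous_id
    (injOn_id _) hGc hη3 (K := Icc 0 (T + 1))
  have hQ := tendsto_nhdsGT_zero_of_strictMonoOn hQc hQmono hQ0
  have htail : ∀ᶠ ε in 𝓝[>] 0, 4 * C * exp (-δ / (2 * Q ε)) < η / 3 := by
    refine ((tendsto_exp_neg_div_two_mul_nhdsGT_zero hδ).comp hQ |>.const_mul (4 * C)).eventually
      (gt_mem_nhds ?_)
    simpa using hη3
  filter_upwards [htail, Ioc_mem_nhdsGT (lt_min hδ' one_pos), (tendsto_nhdsWithin_iff.1 hQ).2]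
    with ε hε ⟨hε0, hεδ'⟩ (hQε : 0 < Q ε)
  rintro s ⟨hs0, hsT⟩
  have ht0 : 0 ≤ max s ε := hs0.trans (le_max_left s ε)
  have htT : max s ε ≤ T + 1 := max_le (by linarith) (by linarith [min_le_right δ' 1])
  have hsmooth := Q.norm_expSmoothing_sub_le (t := max s ε) hQc
    (hQmono.mono (Ici_subset_Ici.2 ht0)) hQtop hGc hbdd hQε hη3.le fun r htr hQr ↦ by
      rw [← dist_eq_norm]; exact (hclock _ ⟨ht0, htT⟩ r htr hQr).le
  have hGts : ‖G (max s ε) - G s‖ < η / 3 := by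
    rw [← dist_eq_norm]
    refine htime _ ⟨ht0, htT⟩ s ⟨hs0, by linarith⟩ ?_
    rw [id, id, Real.dist_eq, abs_of_nonneg (sub_nonneg.2 (le_max_left s ε))]
    linarith [max_le_add_of_nonneg hs0 hε0.le, min_le_left δ' 1]
  calc ‖Q.expSmoothing G (Q ε) (max s ε) - G s‖
      ≤ ‖Q.expSmoothing G (Q ε) (max s ε) - G (max s ε)‖ + ‖G (max s ε) - G s‖ :=
        norm_sub_le_norm_sub_add_norm_sub _ _ _
    _ < η := by linarith

theorem stmt_17_general (m : ℕ) (Q : StieltjesFunction ℝ) (hQc : Continuous Q)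
    (hQmono : StrictMonoOn Q (Set.Ici 0)) (hQ0 : Q 0 = 0)
    (hQtop : Tendsto (fun t => Q t) atTop atTop)
    (G : ℝ → EuclideanSpace ℝ (Fin m)) (hGc : Continuous G)
    (C : ℝ) (hbdd : ∀ r, ‖G r‖ ≤ C)
    (T : ℝ) :
    Tendsto (fun ε : ℝ => ⨆ s : Set.Icc (0 : ℝ) T,
        ‖((Q ε)⁻¹ • ∫ r in Set.Ici (max (s : ℝ) ε),
            Real.exp (-(Q r - Q (max (s : ℝ) ε)) / Q ε) • G r ∂Q.measure) - G s‖)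
      (nhdsWithin 0 (Set.Ioi 0)) (nhds 0) := by
  refine Metric.tendsto_nhds.2 fun η hη ↦ ?_
  filter_upwards [Q.eventually_forall_norm_expSmoothing_sub_lt hQc hQmono hQ0 hQtop hGc hbdd T
    (half_pos hη)] with ε hε
  rw [dist_zero_right, Real.norm_of_nonneg (Real.iSup_nonneg fun _ ↦ norm_nonneg _)]
  refine (Real.iSup_le (fun s ↦ ?_) (half_pos hη).le).trans_lt (half_lt_self hη)
  exact (hε s.1 s.2).le

/-- Uniform convergence of the exponential smoothing: with `Q` a continuous strictly
increasing clock (`Q(0) = 0`, `Q(t) → ∞`) and `G` bounded measurable and continuous,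
`sup_{s∈[0,T]} |G_s^ε − G_s| → 0` as `ε → 0⁺`, where
`G_s^ε = (1/Q(ε)) ∫_{s∨ε}^∞ e^{−(Q(r)−Q(s∨ε))/Q(ε)} G(r) dQ(r)`. -/
theorem stmt_17 (m : ℕ) (Q : StieltjesFunction ℝ) (hQc : Continuous Q)
    (hQmono : StrictMonoOn Q (Set.Ici 0)) (hQ0 : Q 0 = 0)
    (hQtop : Tendsto (fun t => Q t) atTop atTop)
    (G : ℝ → EuclideanSpace ℝ (Fin m)) (hG : Measurable G) (hGc : Continuous G)
    (C : ℝ) (hbdd : ∀ r, ‖G r‖ ≤ C)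
    (T : ℝ) (hT : 0 < T) :
    Tendsto (fun ε : ℝ => ⨆ s : Set.Icc (0 : ℝ) T,
        ‖((Q ε)⁻¹ • ∫ r in Set.Ici (max (s : ℝ) ε),
            Real.exp (-(Q r - Q (max (s : ℝ) ε)) / Q ε) • G r ∂Q.measure) - G s‖)
      (nhdsWithin 0 (Set.Ioi 0)) (nhds 0) :=
  stmt_17_general m Q hQc hQmono hQ0 hQtop G hGc C hbdd T
end
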